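/- Let λ : Fin 4 → (ZMod 2)² be given by λ₁ = λ₃ = (1,0) and λ₂ = λ₄ = (0,1), and call (i,j) adjacent if (i,j) ∈ {(1,2),(2,3),(3,4),(4,1)}. Let G be the presented group with generators β_{i,g} for i ∈ Fin 4 and g ∈ (ZMod 2)², and relators: β_{i,g}·β_{i,g+λᵢ} for all i and g; β_{i,g}·β_{j,g+λᵢ}·β_{i,g+λⱼ}⁻¹·β_{j,g}⁻¹ for all adjacent pairs (i,j) and all g; and β_{1,g} and β_{2,g} for all g. Define γ : (ZMod 2)² → W by γ(a,b) = s₁^a · s₂^b (with a, b ∈ {0,1}). Then the assignment β_{i,g} ↦ γ(g + λᵢ) · sᵢ · γ(g) respects all the relators, i.e. it extends to a well-defined group homomorphism ψ : G → W. -/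

import Mathlib

/-- The Coxeter matrix of the 4-cycle: off-diagonal entries are `2` for cyclically adjacent
indices and `0` (i.e. `∞`) for the two opposite pairs. -/
def C4 : CoxeterMatrix (Fin 4) where
  M := Matrix.of fun i j : Fin 4 ↦
    if i = j then 1
    else if (i.val + 1) % 4 = j.val ∨ (j.val + 1) % 4 = i.val then 2 else 0
  off_diagonal := by
    intro i i' h
    fin_cases i <;> fin_cases i' <;> simp_all

/-- `W`, the right-angled Coxeter group of the 4-cycle. -/
abbrev W : Type := C4.Group

/-- The simple reflections `s₁, s₂, s₃, s₄` of `W`, indexed by `Fin 4`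
(so `s 0 = s₁`, `s 1 = s₂`, `s 2 = s₃`, `s 3 = s₄`). -/
def s (i : Fin 4) : W := C4.simple i

/-- The coloring `λ` of the four edges of the square: `λ₁ = λ₃ = (1,0)`, `λ₂ = λ₄ = (0,1)`
(indexed by `Fin 4`, so index `0` is `λ₁`, etc.). -/
def lam : Fin 4 → ZMod 2 × ZMod 2 := ![(1, 0), (0, 1), (1, 0), (0, 1)]

/-- `(i, j)` is an *adjacent* pair of edge indices if it is one of
`(1,2), (2,3), (3,4), (4,1)` (in `Fin 4` indexing: `(0,1), (1,2), (2,3), (3,0)`). -/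
def Adj (i j : Fin 4) : Prop := (i.val + 1) % 4 = j.val

/-- The relator set of the paper's presentation of `π₁(M_F, p₀)`: generators `β_{i,g}` for
`i ∈ Fin 4`, `g ∈ (ZMod 2)²`, and relators `β_{i,g}·β_{i,g+λᵢ}`,
`β_{i,g}·β_{j,g+λᵢ}·β_{i,g+λⱼ}⁻¹·β_{j,g}⁻¹` for adjacent `(i,j)`, and `β_{1,g}`, `β_{2,g}`. -/
def rels : Set (FreeGroup (Fin 4 × (ZMod 2 × ZMod 2))) :=
  {r | (∃ i g, r = FreeGroup.of (i, g) * FreeGroup.of (i, g + lam i)) ∨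
       (∃ i j g, Adj i j ∧
          r = FreeGroup.of (i, g) * FreeGroup.of (j, g + lam i) *
              (FreeGroup.of (i, g + lam j))⁻¹ * (FreeGroup.of (j, g))⁻¹) ∨
       (∃ g, r = FreeGroup.of (0, g) ∨ r = FreeGroup.of (1, g))}

/-- The presented group `G` with generators `β_{i,g}` and the relators `rels`. -/
abbrev G : Type := PresentedGroup rels

/-- The map `γ : (ZMod 2)² → W`, `γ(a,b) = s₁^a · s₂^b`. -/
def gam (p : ZMod 2 × ZMod 2) : W := s 0 ^ p.1.val * s 1 ^ p.2.val

/-!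
Since `γ` is a homomorphism onto the elementary abelian subgroup `⟨s₁, s₂⟩`, the image
`γ(g + λᵢ) sᵢ γ(g)` of `β_{i,g}` is the `γ(g)`-conjugate of `tᵢ = γ(λᵢ) sᵢ`. The relators
`β_{i,g} β_{i,g+λᵢ}` die because `sᵢ` and `γ(g)` are involutions, `β_{1,g}` and `β_{2,g}` because
`t₁ = t₂ = 1`, and the commutator relators reduce to `g = 0`, where, with `t₃ = s₁s₃` and
`t₄ = s₂s₄`, they amount to `s₁s₃` commuting with `s₂` and with `s₂s₄`, and `s₂s₄` with `s₁`.
-/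

section TwistedGenerators

variable {ι A M : Type*} [AddCommGroup A] [Group M]

def twistedGen (γ : A → M) (σ : ι → M) (χ : ι → A) (p : ι × A) : M :=
  γ (p.2 + χ p.1) * σ p.1 * γ p.2

variable {γ : A → M} {σ : ι → M} {χ : ι → A}

lemma twistedGen_mul_twistedGen_add_self (hγ : ∀ g, γ g * γ g = 1) (hA : ∀ g : A, g + g = 0)
    {i : ι} (hσ : σ i * σ i = 1) (g : A) :
    twistedGen γ σ χ (i, g) * twistedGen γ σ χ (i, g + χ i) = 1 := by
  calc _ = γ (g + χ i) * (σ i * (γ g * γ g) * σ i) * γ (g + χ i) := by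
          simp only [twistedGen, add_assoc, hA, add_zero, mul_assoc]
    _ = 1 := by rw [hγ, mul_one, hσ, mul_one, hγ]

lemma twistedGen_eq_one (hmul : ∀ g h, γ (g + h) = γ g * γ h) (hγ : ∀ g, γ g * γ g = 1)
    {i : ι} (hσ : σ i = γ (χ i)) (g : A) : twistedGen γ σ χ (i, g) = 1 := by
  rw [twistedGen, hσ, hmul, mul_assoc (γ g), hγ, mul_one, hγ]

lemma twistedGen_add_left (hmul : ∀ g h, γ (g + h) = γ g * γ h) (hγ : ∀ g, γ g * γ g = 1)
    (i : ι) (g h : A) :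
    twistedGen γ σ χ (i, g + h) = MulAut.conj (γ g) (twistedGen γ σ χ (i, h)) := by
  have hcomm : γ h * γ g = γ g * γ h := by rw [← hmul, add_comm, hmul]
  simp only [twistedGen, MulAut.conj_apply, add_assoc, hmul, inv_eq_of_mul_eq_one_right (hγ g),
    mul_assoc, hcomm]

lemma twistedGen_commutator_eq_one (hmul : ∀ g h, γ (g + h) = γ g * γ h)
    (hγ : ∀ g, γ g * γ g = 1) {i j : ι}
    (hij : Commute (twistedGen γ σ χ (i, 0)) (twistedGen γ σ χ (j, 0)))
    (hi : Commute (twistedGen γ σ χ (i, 0)) (γ (χ j)))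
    (hj : Commute (twistedGen γ σ χ (j, 0)) (γ (χ i))) (g : A) :
    twistedGen γ σ χ (i, g) * twistedGen γ σ χ (j, g + χ i) *
      (twistedGen γ σ χ (i, g + χ j))⁻¹ * (twistedGen γ σ χ (j, g))⁻¹ = 1 := by
  have hconj := twistedGen_add_left (σ := σ) (χ := χ) hmul hγ
  have hbase : twistedGen γ σ χ (i, 0) * twistedGen γ σ χ (j, χ i) *
      (twistedGen γ σ χ (i, χ j))⁻¹ * (twistedGen γ σ χ (j, 0))⁻¹ = 1 := by
    rw [← add_zero (χ i), ← add_zero (χ j), hconj, hconj, MulAut.conj_apply, MulAut.conj_apply,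
      hj.symm.mul_inv_cancel, hi.symm.mul_inv_cancel, hij.mul_inv_cancel, mul_inv_cancel]
  rw [← map_one (MulAut.conj (γ g)), ← hbase]
  simp only [map_mul, map_inv, ← hconj, add_zero]

end TwistedGenerators

lemma pow_val_add_of_mul_self_eq_one {M : Type*} [Monoid M] {x : M} (hx : x * x = 1)
    (a b : ZMod 2) : x ^ (a + b).val = x ^ a.val * x ^ b.val := by
  rw [← pow_add, ZMod.val_add, ← pow_eq_pow_mod _ (by rwa [pow_two])]

lemma CoxeterSystem.commute_simple_of_eq_two {B H : Type*} [Group H] {M : CoxeterMatrix B}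
    (cs : CoxeterSystem M H) {i j : B} (h : M i j = 2) : Commute (cs.simple i) (cs.simple j) := by
  have hsq : (cs.simple i * cs.simple j) * (cs.simple i * cs.simple j) = 1 := by
    simpa [pow_two, h] using cs.simple_mul_simple_pow i j
  have := eq_inv_of_mul_eq_one_left hsq
  rwa [mul_inv_rev, cs.inv_simple, cs.inv_simple] at this

lemma s_mul_self (i : Fin 4) : s i * s i = 1 :=
  C4.toCoxeterSystem.simple_mul_simple_self i

lemma commute_s_of_parity_ne {i j : Fin 4} (h : i.val % 2 ≠ j.val % 2) : Commute (s i) (s j) :=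
  C4.toCoxeterSystem.commute_simple_of_eq_two (by fin_cases i <;> fin_cases j <;> first | exact absurd rfl h | decide)

lemma commute_s0s2_s1 : Commute (s 0 * s 2) (s 1) :=
  (commute_s_of_parity_ne (by decide)).mul_left (commute_s_of_parity_ne (by decide))

lemma commute_s1s3_s0 : Commute (s 1 * s 3) (s 0) :=
  (commute_s_of_parity_ne (by decide)).mul_left (commute_s_of_parity_ne (by decide))

lemma commute_s0s2_s1s3 : Commute (s 0 * s 2) (s 1 * s 3) :=
  commute_s0s2_s1.mul_right
    ((commute_s_of_parity_ne (by decide)).mul_left (commute_s_of_parity_ne (by decide)))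

lemma gam_add (g h : ZMod 2 × ZMod 2) : gam (g + h) = gam g * gam h := by
  simp only [gam, Prod.fst_add, Prod.snd_add, pow_val_add_of_mul_self_eq_one (s_mul_self _)]
  exact ((commute_s_of_parity_ne (by decide)).pow_pow _ _).mul_mul_mul_comm _ _

@[simp] lemma gam_zero : gam 0 = 1 := by simp [gam]

lemma gam_mul_self (g : ZMod 2 × ZMod 2) : gam g * gam g = 1 := by
  rw [← gam_add, show g + g = 0 by revert g; decide, gam_zero]

@[simp] lemma gam_one_zero : gam (1, 0) = s 0 := by simp [gam, ZMod.val_one]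

@[simp] lemma gam_zero_one : gam (0, 1) = s 1 := by simp [gam, ZMod.val_one]

lemma commute_twistedGen_zero_of_adj {i j : Fin 4} (hij : Adj i j) :
    Commute (twistedGen gam s lam (i, 0)) (twistedGen gam s lam (j, 0)) ∧
    Commute (twistedGen gam s lam (i, 0)) (gam (lam j)) ∧
    Commute (twistedGen gam s lam (j, 0)) (gam (lam i)) := by
  fin_cases i <;> fin_cases j <;>
    simp_all [Adj, twistedGen, lam, s_mul_self, commute_s0s2_s1, commute_s1s3_s0, commute_s0s2_s1s3]

/-- The assignment `β_{i,g} ↦ γ(g + λᵢ) · sᵢ · γ(g)` kills every relator of `G`, hence extends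
to a well-defined group homomorphism `ψ : G → W` with
`ψ(β_{i,g}) = γ(g + λᵢ) · sᵢ · γ(g)`. -/
theorem stmt14 :
    (∀ r ∈ rels,
      FreeGroup.lift (fun p : Fin 4 × (ZMod 2 × ZMod 2) =>
        gam (p.2 + lam p.1) * s p.1 * gam p.2) r = 1) ∧
    ∃ ψ : G →* W, ∀ (i : Fin 4) (g : ZMod 2 × ZMod 2),
      ψ (PresentedGroup.of (i, g)) = gam (g + lam i) * s i * gam g := by
  have hkill : ∀ r ∈ rels, FreeGroup.lift (twistedGen gam s lam) r = 1 := by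
    rintro r (⟨i, g, rfl⟩ | ⟨i, j, g, hij, rfl⟩ | ⟨g, rfl | rfl⟩) <;>
      simp only [map_mul, map_inv, FreeGroup.lift_apply_of]
    · exact twistedGen_mul_twistedGen_add_self gam_mul_self (by decide) (s_mul_self i) g
    · obtain ⟨hij, hi, hj⟩ := commute_twistedGen_zero_of_adj hij
      exact twistedGen_commutator_eq_one gam_add gam_mul_self hij hi hj g
    · exact twistedGen_eq_one gam_add gam_mul_self (by simp [lam]) g
    · exact twistedGen_eq_one gam_add gam_mul_self (by simp [lam]) g
  exact ⟨hkill, PresentedGroup.toGroup hkill, fun i g => PresentedGroup.toGroup.of hkill⟩
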